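/- (Binet's first formula) For every real x > 0, ln Γ(x) = P(x) + ∫_0^∞ (1/t)·(1/2 − 1/t + 1/(e^t − 1))·e^{-tx} dt, where the integrand is extended continuously at t = 0 and the integral converges. -/

import Mathlib

open Real MeasureTheory Set Filter Topology Metric intervalIntegral

/-- `P x = x ln x − x − (1/2) ln x + (1/2) ln (2π)`. -/
noncomputable def stirlingP (x : ℝ) : ℝ :=
  x * Real.log x - x - (1 / 2) * Real.log x + (1 / 2) * Real.log (2 * π)



private lemma nonneg_of_hasDerivAt (f f' : ℝ → ℝ) (hf : ∀ t, HasDerivAt f (f' t) t)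
    (h0 : f 0 = 0) (hf' : ∀ t, 0 < t → 0 ≤ f' t) : ∀ t, 0 ≤ t → 0 ≤ f t := by
  have hmono : MonotoneOn f (Set.Ici 0) := by
    apply monotoneOn_of_deriv_nonneg (convex_Ici 0)
    · exact fun t _ => (hf t).differentiableAt.continuousAt.continuousWithinAt
    · exact fun t _ => (hf t).differentiableAt.differentiableWithinAt
    · intro t ht
      rw [interior_Ici] at ht
      rw [(hf t).deriv]
      exact hf' t ht
  intro t ht
  have := hmono (self_mem_Ici) ht ht
  linarith [this, h0]

-- h₂(t) = t e^t − 2 e^t + t + 2 ≥ 0 on t ≥ 0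
private lemma aux_h2 : ∀ t : ℝ, 0 ≤ t → 0 ≤ t * exp t - 2 * exp t + t + 2 := by
  have d2 : ∀ t : ℝ, HasDerivAt (fun t => (t - 1) * exp t + 1) (t * exp t) t := by
    intro t
    have := ((hasDerivAt_id t).sub_const 1).mul (Real.hasDerivAt_exp t)
    refine (this.add_const 1).congr_deriv ?_
    simp only [id_eq]; ring
  have h2' : ∀ t : ℝ, 0 ≤ t → 0 ≤ (t - 1) * exp t + 1 := by
    apply nonneg_of_hasDerivAt _ _ d2
    · simp
    · intro t ht; positivity
  apply nonneg_of_hasDerivAt _ (fun t => (t - 1) * exp t + 1)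
  · intro t
    have h1 := ((hasDerivAt_id t).mul (Real.hasDerivAt_exp t)).sub
      ((Real.hasDerivAt_exp t).const_mul 2)
    have h2 := (h1.add (hasDerivAt_id t)).add_const 2
    refine h2.congr_deriv ?_
    simp only [id_eq]; ring
  · simp
  · exact fun t ht => h2' t ht.le

-- h(t) = (t²−2t+4)(e^t−1) − 4t ≥ 0 on t ≥ 0
private lemma aux_h : ∀ t : ℝ, 0 ≤ t → 0 ≤ (t ^ 2 - 2 * t + 4) * (exp t - 1) - 4 * t := by
  have d2 : ∀ t : ℝ, HasDerivAt (fun t => exp t * (t ^ 2 + 2) - 2 * t - 2)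
      (exp t * (t ^ 2 + 2 * t + 2) - 2) t := by
    intro t
    have hp : HasDerivAt (fun t : ℝ => t ^ 2 + 2) (2 * t) t := by
      simpa using ((hasDerivAt_pow 2 t).add_const 2)
    have h1 := ((Real.hasDerivAt_exp t).mul hp).sub ((hasDerivAt_id t).const_mul 2)
    refine (h1.sub_const 2).congr_deriv ?_
    ring
  have h2' : ∀ t : ℝ, 0 ≤ t → 0 ≤ exp t * (t ^ 2 + 2) - 2 * t - 2 := by
    apply nonneg_of_hasDerivAt _ _ d2
    · simp
    · intro t ht
      nlinarith [Real.one_le_exp ht.le, sq_nonneg t]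
  apply nonneg_of_hasDerivAt _ (fun t => exp t * (t ^ 2 + 2) - 2 * t - 2)
  · intro t
    have hp : HasDerivAt (fun t : ℝ => t ^ 2 - 2 * t + 4) (2 * t - 2) t := by
      have := ((hasDerivAt_pow 2 t).sub ((hasDerivAt_id t).const_mul 2)).add_const 4
      simpa using this
    have he : HasDerivAt (fun t : ℝ => exp t - 1) (exp t) t := (Real.hasDerivAt_exp t).sub_const 1
    have h1 := (hp.mul he).sub ((hasDerivAt_id t).const_mul 4)
    refine h1.congr_deriv ?_
    ring
  · simp
  · exact fun t ht => h2' t ht.le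


noncomputable def binetg (t : ℝ) : ℝ := 1 / 2 - 1 / t + 1 / (Real.exp t - 1)

lemma exp_sub_one_pos {t : ℝ} (ht : 0 < t) : 0 < Real.exp t - 1 := by
  have := Real.add_one_lt_exp (ne_of_gt ht)
  linarith

lemma binetg_nonneg {t : ℝ} (ht : 0 < t)
    (haux : 0 ≤ t * exp t - 2 * exp t + t + 2) : 0 ≤ binetg t := by
  have h1 : 0 < Real.exp t - 1 := exp_sub_one_pos ht
  have he : binetg t = (t * exp t - 2 * exp t + t + 2) / (2 * t * (exp t - 1)) := by
    unfold binetg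
    field_simp
    ring
  rw [he]
  positivity

lemma binetg_le {t : ℝ} (ht : 0 < t)
    (haux : 0 ≤ (t ^ 2 - 2 * t + 4) * (exp t - 1) - 4 * t) : binetg t ≤ t / 4 := by
  have h1 : 0 < Real.exp t - 1 := exp_sub_one_pos ht
  have he : t / 4 - binetg t
      = ((t ^ 2 - 2 * t + 4) * (exp t - 1) - 4 * t) / (4 * t * (exp t - 1)) := by
    unfold binetg
    field_simp
    ring
  have : 0 ≤ t / 4 - binetg t := by
    rw [he]; positivity
  linarith


lemma binetg_nonneg' {t : ℝ} (ht : 0 < t) : 0 ≤ binetg t :=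
  binetg_nonneg ht (aux_h2 t ht.le)

lemma binetg_le' {t : ℝ} (ht : 0 < t) : binetg t ≤ t / 4 :=
  binetg_le ht (aux_h t ht.le)



lemma integral_exp_neg_mul_Ioi {s : ℝ} (hs : 0 < s) :
    ∫ t in Ioi (0 : ℝ), Real.exp (-(s * t)) = 1 / s := by
  have h := MeasureTheory.integral_comp_mul_left_Ioi (fun u => Real.exp (-u)) 0 hs
  simp only [mul_zero, integral_exp_neg_Ioi_zero, smul_eq_mul, mul_one] at h
  rw [h, one_div]


lemma integrableOn_exp_neg_mul' {s : ℝ} (hs : 0 < s) :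
    IntegrableOn (fun t : ℝ => Real.exp (-t * s)) (Ioi 0) := by
  have hfe : (fun t : ℝ => Real.exp (-t * s)) = fun t : ℝ => Real.exp (-s * t) := by
    funext t; ring_nf
  rw [hfe]
  exact exp_neg_integrableOn_Ioi 0 hs

lemma integral_exp_neg_mul_Ioi' {s : ℝ} (hs : 0 < s) :
    ∫ t in Ioi (0 : ℝ), Real.exp (-t * s) = 1 / s := by
  have hfe : (fun t : ℝ => Real.exp (-t * s)) = fun t : ℝ => Real.exp (-(s * t)) := by
    funext t; ring_nf
  rw [hfe]
  exact integral_exp_neg_mul_Ioi hs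

lemma binetg_continuousOn : ContinuousOn binetg (Ioi 0) := by
  unfold binetg
  refine ContinuousOn.add (ContinuousOn.sub continuousOn_const ?_) ?_
  · exact continuousOn_const.div continuousOn_id (fun t ht => ne_of_gt ht)
  · exact continuousOn_const.div
      ((Real.continuous_exp.continuousOn).sub continuousOn_const)
      (fun t ht => ne_of_gt (exp_sub_one_pos ht))

lemma binetF_continuousOn (x : ℝ) :
    ContinuousOn (fun t : ℝ => 1 / t * binetg t * Real.exp (-t * x)) (Ioi 0) := by
  refine ContinuousOn.mul (ContinuousOn.mul ?_ binetg_continuousOn) ?_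
  · exact continuousOn_const.div continuousOn_id (fun t ht => ne_of_gt ht)
  · exact (Real.continuous_exp.comp ((continuous_id.neg).mul continuous_const)).continuousOn

lemma binetF_nonneg {t x : ℝ} (ht : 0 < t) :
    0 ≤ 1 / t * binetg t * Real.exp (-t * x) := by
  have := binetg_nonneg' ht
  positivity

lemma binetF_le {t x : ℝ} (ht : 0 < t) :
    1 / t * binetg t * Real.exp (-t * x) ≤ 1 / 4 * Real.exp (-(x * t)) := by
  rw [show -(x * t) = -t * x by ring]
  have h1 : 1 / t * binetg t ≤ 1 / 4 := by
    rw [div_mul_eq_mul_div, one_mul, div_le_div_iff₀ ht (by norm_num : (0:ℝ) < 4)]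
    have := binetg_le' ht
    linarith
  exact mul_le_mul_of_nonneg_right h1 (Real.exp_pos _).le |>.trans_eq rfl
    |>.trans (le_refl _)

lemma binet_integrableOn {x : ℝ} (hx : 0 < x) :
    IntegrableOn (fun t : ℝ => 1 / t * binetg t * Real.exp (-t * x)) (Ioi 0) := by
  have hdom : IntegrableOn (fun t : ℝ => 1 / 4 * Real.exp (-x * t)) (Ioi 0) :=
    (exp_neg_integrableOn_Ioi 0 hx).const_mul _
  refine Integrable.mono' hdom
    ((binetF_continuousOn x).aestronglyMeasurable measurableSet_Ioi) ?_
  rw [ae_restrict_iff' measurableSet_Ioi]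
  filter_upwards with t
  intro ht
  rw [Real.norm_eq_abs, abs_of_nonneg (binetF_nonneg ht)]
  simpa [neg_mul] using binetF_le (x := x) ht

noncomputable def binetμ (x : ℝ) : ℝ :=
  ∫ t in Ioi (0 : ℝ), 1 / t * binetg t * Real.exp (-t * x)

lemma binetμ_nonneg {x : ℝ} : 0 ≤ binetμ x := by
  refine setIntegral_nonneg measurableSet_Ioi fun t ht => binetF_nonneg ht

lemma binetμ_le {x : ℝ} (hx : 0 < x) : binetμ x ≤ 1 / (4 * x) := by
  have h1 : binetμ x ≤ ∫ t in Ioi (0 : ℝ), 1 / 4 * Real.exp (-(x * t)) := by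
    refine setIntegral_mono_on (binet_integrableOn hx) ?_ measurableSet_Ioi
      (fun t ht => binetF_le ht)
    show Integrable _ (volume.restrict (Ioi 0))
    simpa [neg_mul] using (exp_neg_integrableOn_Ioi 0 hx).const_mul (1/4 : ℝ)
  rw [MeasureTheory.integral_const_mul, integral_exp_neg_mul_Ioi hx] at h1
  calc binetμ x ≤ 1 / 4 * (1 / x) := h1
    _ = 1 / (4 * x) := by ring



lemma stirlingP_convexOn : ConvexOn ℝ (Ioi 0) stirlingP := by
  have h1 : ConvexOn ℝ (Ioi 0) (fun x : ℝ => x * Real.log x) :=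
    Real.convexOn_mul_log.subset Ioi_subset_Ici_self (convex_Ioi 0)
  have h2 : ConcaveOn ℝ (Ioi 0) (fun x : ℝ => 1 / 2 * Real.log x) :=
    (strictConcaveOn_log_Ioi.concaveOn).smul (by norm_num)
  have h3 : ConcaveOn ℝ (Ioi 0) (fun x : ℝ => x) := concaveOn_id (convex_Ioi 0)
  exact ((h1.sub h3).sub h2).add_const _

lemma binetμ_convexOn : ConvexOn ℝ (Ioi 0) binetμ := by
  refine ⟨convex_Ioi 0, ?_⟩
  intro x hx y hy a b ha hb hab
  rw [mem_Ioi] at hx hy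
  have hxy : 0 < a * x + b * y := by
    rcases eq_or_lt_of_le ha with h | h
    · have hb1 : b = 1 := by linarith
      simp [← h, hb1, hy]
    · have := mul_nonneg hb hy.le
      nlinarith
  have hax : (0:ℝ) < x := hx
  simp only [smul_eq_mul]
  have hconv : ∀ t ∈ Ioi (0:ℝ),
      1 / t * binetg t * Real.exp (-t * (a * x + b * y)) ≤
        a * (1 / t * binetg t * Real.exp (-t * x)) +
          b * (1 / t * binetg t * Real.exp (-t * y)) := by
    intro t ht
    rw [mem_Ioi] at ht
    have hexp : Real.exp (-t * (a * x + b * y)) ≤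
        a * Real.exp (-t * x) + b * Real.exp (-t * y) := by
      have h := convexOn_exp.2 (mem_univ (-t * x)) (mem_univ (-t * y)) ha hb hab
      simp only [smul_eq_mul] at h
      have h0 : -t * (a * x + b * y) = a * (-t * x) + b * (-t * y) := by ring
      rw [h0]
      exact h
    have hg : 0 ≤ 1 / t * binetg t := by
      have := binetg_nonneg' ht; positivity
    calc 1 / t * binetg t * Real.exp (-t * (a * x + b * y))
        ≤ 1 / t * binetg t * (a * Real.exp (-t * x) + b * Real.exp (-t * y)) :=
          mul_le_mul_of_nonneg_left hexp hg
      _ = a * (1 / t * binetg t * Real.exp (-t * x)) +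
          b * (1 / t * binetg t * Real.exp (-t * y)) := by ring
  have hIx := (binet_integrableOn hx).const_mul a
  have hIy := (binet_integrableOn hy).const_mul b
  calc binetμ (a * x + b * y)
      ≤ ∫ t in Ioi (0:ℝ), (a * (1 / t * binetg t * Real.exp (-t * x)) +
          b * (1 / t * binetg t * Real.exp (-t * y))) := by
        exact setIntegral_mono_on (binet_integrableOn hxy) (hIx.add hIy)
          measurableSet_Ioi hconv
    _ = a * binetμ x + b * binetμ y := by
        rw [MeasureTheory.integral_add hIx hIy, MeasureTheory.integral_const_mul,
          MeasureTheory.integral_const_mul]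
        rfl


lemma exp_antideriv {t : ℝ} (ht : t ≠ 0) (s : ℝ) :
    HasDerivAt (fun s : ℝ => -Real.exp (-t * s) / t) (Real.exp (-t * s)) s := by
  have h1 : HasDerivAt (fun s : ℝ => -t * s) (-t) s := by
    simpa using (hasDerivAt_id s).const_mul (-t)
  have h2 := (h1.exp).neg.div_const t
  refine h2.congr_deriv ?_
  rw [mul_neg, neg_neg, mul_div_assoc, div_self ht, mul_one]

lemma integral_exp_Ioc {t a b : ℝ} (ht : 0 < t) (hab : a ≤ b) :
    ∫ s in Ioc a b, Real.exp (-t * s) = (Real.exp (-t * a) - Real.exp (-t * b)) / t := by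
  rw [← intervalIntegral.integral_of_le hab]
  rw [intervalIntegral.integral_eq_sub_of_hasDerivAt
    (f := fun s : ℝ => -Real.exp (-t * s) / t) (fun s _ => exp_antideriv ht.ne' s)
    ((Real.continuous_exp.comp ((continuous_const).mul continuous_id)).intervalIntegrable a b)]
  ring

lemma frullani_key {a b : ℝ} (ha : 0 < a) (hab : a ≤ b) :
    Integrable (Function.uncurry fun t s : ℝ => Real.exp (-t * s))
      ((volume.restrict (Ioi 0)).prod (volume.restrict (Ioc a b))) := by
  have hprod : (volume.restrict (Ioi (0:ℝ))).prod (volume.restrict (Ioc a b)) =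
      (volume.prod volume).restrict (Ioi 0 ×ˢ Ioc a b) := Measure.prod_restrict _ _
  have hdom : Integrable (fun p : ℝ × ℝ => Real.exp (-a * p.1) * (1 : ℝ))
      ((volume.restrict (Ioi (0:ℝ))).prod (volume.restrict (Ioc a b))) := by
    refine Integrable.mul_prod (L := ℝ) (f := fun t : ℝ => Real.exp (-a * t)) (g := fun _ : ℝ => (1:ℝ)) (μ := volume.restrict (Ioi (0:ℝ))) (ν := volume.restrict (Ioc a b)) ?_ ?_
    · simpa [neg_mul, IntegrableOn] using exp_neg_integrableOn_Ioi 0 ha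
    · exact integrableOn_const measure_Ioc_lt_top.ne
  refine hdom.mono' ?_ ?_
  · exact (Real.continuous_exp.comp
      ((continuous_fst.neg).mul continuous_snd)).aestronglyMeasurable
  · rw [hprod, ae_restrict_iff' (measurableSet_Ioi.prod measurableSet_Ioc)]
    filter_upwards with p hp
    obtain ⟨hp1, hp2⟩ := hp
    simp only [Function.uncurry]
    rw [Real.norm_eq_abs, Real.abs_exp, mul_one]
    apply Real.exp_le_exp.2
    have h1 : a ≤ p.2 := le_of_lt hp2.1
    nlinarith [le_of_lt (mem_Ioi.1 hp1)]

lemma frullani {a b : ℝ} (ha : 0 < a) (hab : a ≤ b) :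
    IntegrableOn (fun t : ℝ => (Real.exp (-t * a) - Real.exp (-t * b)) / t) (Ioi 0) ∧
      ∫ t in Ioi (0:ℝ), (Real.exp (-t * a) - Real.exp (-t * b)) / t
        = Real.log b - Real.log a := by
  have hb : 0 < b := lt_of_lt_of_le ha hab
  have hkey := frullani_key ha hab
  have heq : ∀ t ∈ Ioi (0:ℝ),
      (∫ s in Ioc a b, Real.exp (-t * s)) =
        (Real.exp (-t * a) - Real.exp (-t * b)) / t := fun t ht =>
    integral_exp_Ioc (mem_Ioi.1 ht) hab
  constructor
  · have h1 : Integrable (fun t => ∫ s in Ioc a b, Real.exp (-t * s))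
        (volume.restrict (Ioi (0:ℝ))) := hkey.integral_prod_left
    exact h1.congr (Filter.eventuallyEq_of_mem (self_mem_ae_restrict measurableSet_Ioi) heq)
  · have hswap := MeasureTheory.integral_integral_swap hkey
    have hL : ∫ t in Ioi (0:ℝ), ∫ s in Ioc a b, Real.exp (-t * s)
        = ∫ t in Ioi (0:ℝ), (Real.exp (-t * a) - Real.exp (-t * b)) / t :=
      setIntegral_congr_fun measurableSet_Ioi heq
    have hR : ∫ s in Ioc a b, ∫ t in Ioi (0:ℝ), Real.exp (-t * s)
        = ∫ s in Ioc a b, 1 / s := by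
      refine setIntegral_congr_fun measurableSet_Ioc fun s hs => ?_
      have hs0 : 0 < s := lt_of_lt_of_le ha (le_of_lt hs.1)
      have h2 : ∀ t : ℝ, Real.exp (-t * s) = Real.exp (-(s * t)) := fun t => by ring_nf
      calc ∫ t in Ioi (0:ℝ), Real.exp (-t * s)
          = ∫ t in Ioi (0:ℝ), Real.exp (-(s * t)) := by
            exact setIntegral_congr_fun measurableSet_Ioi fun t _ => h2 t
        _ = 1 / s := by
            have h := MeasureTheory.integral_comp_mul_left_Ioi
              (fun u => Real.exp (-u)) 0 hs0
            simp only [mul_zero, integral_exp_neg_Ioi_zero, smul_eq_mul, mul_one] at h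
            rw [h, one_div]
    have hlast : ∫ s in Ioc a b, (1:ℝ) / s = Real.log b - Real.log a := by
      rw [← intervalIntegral.integral_of_le hab, integral_one_div, Real.log_div hb.ne' ha.ne']
      intro h0
      rw [Set.mem_uIcc] at h0
      rcases h0 with ⟨h1, _⟩ | ⟨h1, _⟩ <;> linarith
    rw [← hL, hswap, hR, hlast]



lemma binetg_le_half {t : ℝ} (ht : 0 < t) : binetg t ≤ 1 / 2 := by
  have h1 : t < Real.exp t - 1 := by
    have := Real.add_one_lt_exp (ne_of_gt ht); linarith
  have h2 : 1 / (Real.exp t - 1) ≤ 1 / t := by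
    apply one_div_le_one_div_of_le ht h1.le
  unfold binetg; linarith

noncomputable def Dfun (x : ℝ) : ℝ :=
  ∫ t in Ioi (0 : ℝ), binetg t * (1 - Real.exp (-t)) / t * Real.exp (-t * x)

noncomputable def Rfun (x : ℝ) : ℝ :=
  (x + 1 / 2) * (Real.log (x + 1) - Real.log x) - 1

lemma one_sub_exp_mem {t : ℝ} (ht : 0 < t) :
    0 < 1 - Real.exp (-t) ∧ 1 - Real.exp (-t) ≤ 1 := by
  constructor
  · have : Real.exp (-t) < 1 := Real.exp_lt_one_iff.2 (by linarith)
    linarith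
  · have : 0 < Real.exp (-t) := Real.exp_pos _
    linarith

lemma gdecay_bounds {t : ℝ} (ht : 0 < t) :
    0 ≤ binetg t * (1 - Real.exp (-t)) ∧ binetg t * (1 - Real.exp (-t)) ≤ 1 / 2 := by
  obtain ⟨h1, h2⟩ := one_sub_exp_mem ht
  have hg0 := binetg_nonneg' ht
  have hgh := binetg_le_half ht
  constructor
  · positivity
  · nlinarith

lemma K_bounds {t : ℝ} (ht : 0 < t) :
    0 ≤ binetg t * (1 - Real.exp (-t)) / t ∧
      binetg t * (1 - Real.exp (-t)) / t ≤ 1 / 4 := by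
  obtain ⟨h1, h2⟩ := one_sub_exp_mem ht
  have hg0 := binetg_nonneg' ht
  have hg4 := binetg_le' ht
  constructor
  · positivity
  · rw [div_le_iff₀ ht]
    nlinarith

lemma K_continuousOn :
    ContinuousOn (fun t : ℝ => binetg t * (1 - Real.exp (-t)) / t) (Ioi 0) := by
  apply ContinuousOn.div
  · exact binetg_continuousOn.mul
      (continuousOn_const.sub (Real.continuous_exp.comp continuous_neg).continuousOn)
  · exact continuousOn_id
  · exact fun t ht => ne_of_gt ht

lemma exp_factor_continuous (x : ℝ) :
    Continuous (fun t : ℝ => Real.exp (-t * x)) :=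
  Real.continuous_exp.comp (continuous_neg.mul continuous_const)

lemma Dfun_integrableOn {x : ℝ} (hx : 0 < x) :
    IntegrableOn (fun t : ℝ => binetg t * (1 - Real.exp (-t)) / t * Real.exp (-t * x))
      (Ioi 0) := by
  refine Integrable.mono' ((integrableOn_exp_neg_mul' hx).const_mul (1/4 : ℝ))
    ((K_continuousOn.mul (exp_factor_continuous x).continuousOn).aestronglyMeasurable
      measurableSet_Ioi) ?_
  rw [ae_restrict_iff' measurableSet_Ioi]
  filter_upwards with t ht
  obtain ⟨h0, h4⟩ := K_bounds ht
  rw [Real.norm_eq_abs, abs_of_nonneg (by positivity)]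
  exact mul_le_mul_of_nonneg_right h4 (Real.exp_pos _).le

lemma Dder_integrableOn {x : ℝ} (hx : 0 < x) :
    IntegrableOn (fun t : ℝ => binetg t * (1 - Real.exp (-t)) * Real.exp (-t * x))
      (Ioi 0) := by
  refine Integrable.mono' ((integrableOn_exp_neg_mul' hx).const_mul (1/2 : ℝ))
    (((binetg_continuousOn.mul
      (continuousOn_const.sub (Real.continuous_exp.comp continuous_neg).continuousOn)).mul
      (exp_factor_continuous x).continuousOn).aestronglyMeasurable measurableSet_Ioi) ?_
  rw [ae_restrict_iff' measurableSet_Ioi]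
  filter_upwards with t ht
  obtain ⟨h0, h2⟩ := gdecay_bounds ht
  rw [Real.norm_eq_abs, abs_of_nonneg (by positivity)]
  exact mul_le_mul_of_nonneg_right h2 (Real.exp_pos _).le

lemma Dder_eval {x : ℝ} (hx : 0 < x) :
    ∫ t in Ioi (0:ℝ), binetg t * (1 - Real.exp (-t)) * Real.exp (-t * x)
      = 1 / (2 * x) - 1 / (2 * (x + 1)) - (Real.log (x + 1) - Real.log x)
        + 1 / (x + 1) := by
  have hx1 : 0 < x + 1 := by linarith
  have hfr := frullani hx (by linarith : x ≤ x + 1)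
  have hI1 : IntegrableOn (fun t : ℝ => 1 / 2 * Real.exp (-t * x)) (Ioi 0) :=
    (integrableOn_exp_neg_mul' hx).const_mul _
  have hI2 : IntegrableOn (fun t : ℝ => 1 / 2 * Real.exp (-t * (x + 1))) (Ioi 0) :=
    (integrableOn_exp_neg_mul' hx1).const_mul _
  have hI3 := hfr.1
  have hI4 : IntegrableOn (fun t : ℝ => Real.exp (-t * (x + 1))) (Ioi 0) :=
    integrableOn_exp_neg_mul' hx1
  have hsplit : ∀ t ∈ Ioi (0:ℝ),
      binetg t * (1 - Real.exp (-t)) * Real.exp (-t * x)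
        = 1 / 2 * Real.exp (-t * x) - 1 / 2 * Real.exp (-t * (x + 1))
          - (Real.exp (-t * x) - Real.exp (-t * (x + 1))) / t
          + Real.exp (-t * (x + 1)) := by
    intro t ht
    rw [mem_Ioi] at ht
    have he : 0 < Real.exp t - 1 := exp_sub_one_pos ht
    have hexp1 : Real.exp (-t * (x + 1)) = Real.exp (-t * x) * Real.exp (-t) := by
      rw [← Real.exp_add]; ring_nf
    unfold binetg
    rw [hexp1, Real.exp_neg]
    have h0 : Real.exp t ≠ 0 := Real.exp_ne_zero t
    field_simp
  rw [setIntegral_congr_fun measurableSet_Ioi hsplit]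
  have hI12 : IntegrableOn (fun t : ℝ => 1 / 2 * Real.exp (-t * x)
      - 1 / 2 * Real.exp (-t * (x + 1))) (Ioi 0) := hI1.sub hI2
  have hI123 : IntegrableOn (fun t : ℝ => 1 / 2 * Real.exp (-t * x)
      - 1 / 2 * Real.exp (-t * (x + 1))
      - (Real.exp (-t * x) - Real.exp (-t * (x + 1))) / t) (Ioi 0) := hI12.sub hI3
  rw [MeasureTheory.integral_add hI123 hI4,
    MeasureTheory.integral_sub hI12 hI3,
    MeasureTheory.integral_sub hI1 hI2,
    MeasureTheory.integral_const_mul, MeasureTheory.integral_const_mul,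
    integral_exp_neg_mul_Ioi' hx, integral_exp_neg_mul_Ioi' hx1, hfr.2]
  have h1 : x ≠ 0 := hx.ne'
  have h2 : x + 1 ≠ 0 := hx1.ne'
  field_simp

lemma hasDerivAt_Dfun {x₀ : ℝ} (hx : 0 < x₀) :
    HasDerivAt Dfun (-(1 / (2 * x₀) - 1 / (2 * (x₀ + 1))
      - (Real.log (x₀ + 1) - Real.log x₀) + 1 / (x₀ + 1))) x₀ := by
  have hε : 0 < x₀ / 2 := by linarith
  have key := _root_.hasDerivAt_integral_of_dominated_loc_of_deriv_le (μ := volume.restrict (Ioi 0))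
    (F := fun x t => binetg t * (1 - Real.exp (-t)) / t * Real.exp (-t * x))
    (F' := fun x t => -(binetg t * (1 - Real.exp (-t)) * Real.exp (-t * x)))
    (x₀ := x₀) (bound := fun t => 1 / 2 * Real.exp (-t * (x₀ / 2))) (ball_mem_nhds x₀ hε)
    ?_ ?_ ?_ ?_ ?_ ?_
  · obtain ⟨-, hd⟩ := key
    have he : (∫ t in Ioi (0:ℝ), -(binetg t * (1 - Real.exp (-t)) * Real.exp (-t * x₀)))
        = -(1 / (2 * x₀) - 1 / (2 * (x₀ + 1)) - (Real.log (x₀ + 1) - Real.log x₀)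
          + 1 / (x₀ + 1)) := by
      rw [MeasureTheory.integral_neg, Dder_eval hx]
    rw [← he]
    exact hd
  · filter_upwards with x
    exact (K_continuousOn.mul (exp_factor_continuous x).continuousOn).aestronglyMeasurable
      measurableSet_Ioi
  · exact Dfun_integrableOn hx
  · exact (((binetg_continuousOn.mul
      (continuousOn_const.sub (Real.continuous_exp.comp continuous_neg).continuousOn)).mul
      (exp_factor_continuous x₀).continuousOn).aestronglyMeasurable measurableSet_Ioi).neg
  · rw [ae_restrict_iff' measurableSet_Ioi]
    filter_upwards with t ht
    intro x hxb
    rw [mem_ball, Real.dist_eq, abs_lt] at hxb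
    have hxlow : x₀ / 2 ≤ x := by linarith [hxb.1]
    rw [mem_Ioi] at ht
    obtain ⟨h0, h2⟩ := gdecay_bounds ht
    rw [norm_neg, Real.norm_eq_abs, abs_of_nonneg (by positivity)]
    have hmono : Real.exp (-t * x) ≤ Real.exp (-t * (x₀ / 2)) := by
      apply Real.exp_le_exp.2
      nlinarith
    nlinarith [Real.exp_pos (-t * x), Real.exp_pos (-t * (x₀ / 2))]
  · exact (integrableOn_exp_neg_mul' hε).const_mul _
  · rw [ae_restrict_iff' measurableSet_Ioi]
    filter_upwards with t ht
    intro x hxb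
    rw [mem_Ioi] at ht
    have hd : HasDerivAt (fun x : ℝ => binetg t * (1 - Real.exp (-t)) / t * Real.exp (-t * x))
        (binetg t * (1 - Real.exp (-t)) / t * (Real.exp (-t * x) * (-t))) x := by
      have h1 : HasDerivAt (fun x : ℝ => -t * x) (-t) x := by
        simpa using (hasDerivAt_id x).const_mul (-t)
      exact (h1.exp).const_mul _
    refine hd.congr_deriv ?_
    field_simp

noncomputable def Rfun' (x : ℝ) : ℝ :=
  (Real.log (x + 1) - Real.log x) + (x + 1 / 2) * (1 / (x + 1) - 1 / x)

lemma hasDerivAt_Rfun {x : ℝ} (hx : 0 < x) : HasDerivAt Rfun (Rfun' x) x := by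
  have hx1 : 0 < x + 1 := by linarith
  have hlog1 : HasDerivAt (fun x : ℝ => Real.log (x + 1)) (1 / (x + 1)) x := by
    have := ((hasDerivAt_id x).add_const 1).log hx1.ne'
    simpa using this
  have hlog2 : HasDerivAt Real.log (1 / x) x := by
    simpa [one_div] using Real.hasDerivAt_log hx.ne'
  have h1 : HasDerivAt (fun x : ℝ => x + 1 / 2) 1 x := (hasDerivAt_id x).add_const _
  have h2 := (h1.mul (hlog1.sub hlog2)).sub_const 1
  refine h2.congr_deriv ?_
  unfold Rfun'
  simp only [Pi.sub_apply]
  ring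

lemma binet_deriv_eq {x : ℝ} (hx : 0 < x) :
    -(1 / (2 * x) - 1 / (2 * (x + 1)) - (Real.log (x + 1) - Real.log x) + 1 / (x + 1))
      = Rfun' x := by
  unfold Rfun'
  have h1 : x ≠ 0 := hx.ne'
  have h2 : x + 1 ≠ 0 := by positivity
  field_simp
  ring

lemma mu_diff {x : ℝ} (hx : 0 < x) : binetμ x - binetμ (x + 1) = Dfun x := by
  have hx1 : 0 < x + 1 := by linarith
  rw [binetμ, binetμ, Dfun,
    ← MeasureTheory.integral_sub (binet_integrableOn hx) (binet_integrableOn hx1)]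
  refine setIntegral_congr_fun measurableSet_Ioi fun t ht => ?_
  rw [mem_Ioi] at ht
  have hexp1 : Real.exp (-t * (x + 1)) = Real.exp (-t * x) * Real.exp (-t) := by
    rw [← Real.exp_add]; ring_nf
  rw [hexp1]
  field_simp

lemma tendsto_binetμ : Tendsto binetμ atTop (𝓝 0) := by
  have hb : Tendsto (fun x : ℝ => 1 / (4 * x)) atTop (𝓝 0) := by
    have h4 : Tendsto (fun x : ℝ => 4 * x) atTop atTop :=
      Tendsto.const_mul_atTop (by norm_num) tendsto_id
    have h5 : Tendsto (fun x : ℝ => ((fun x : ℝ => 4 * x) x)⁻¹) atTop (𝓝 0) := h4.inv_tendsto_atTop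
    simpa [one_div] using h5
  refine tendsto_of_tendsto_of_tendsto_of_le_of_le' tendsto_const_nhds hb ?_ ?_
  · filter_upwards with x using binetμ_nonneg
  · filter_upwards [eventually_gt_atTop (0:ℝ)] with x hx using binetμ_le hx

lemma Rfun_bounds {x : ℝ} (hx : 0 < x) :
    -(1 / (2 * (x + 1))) ≤ Rfun x ∧ Rfun x ≤ 1 / (2 * x) := by
  have hx1 : 0 < x + 1 := by linarith
  have hL_up : Real.log (x + 1) - Real.log x ≤ 1 / x := by
    have h := Real.log_le_sub_one_of_pos (show (0:ℝ) < (x+1)/x by positivity)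
    rw [Real.log_div hx1.ne' hx.ne'] at h
    calc Real.log (x + 1) - Real.log x ≤ (x + 1) / x - 1 := h
      _ = 1 / x := by field_simp; ring
  have hL_lo : 1 / (x + 1) ≤ Real.log (x + 1) - Real.log x := by
    have h := Real.log_le_sub_one_of_pos (show (0:ℝ) < x/(x+1) by positivity)
    rw [Real.log_div hx.ne' hx1.ne'] at h
    have h2 : x / (x + 1) - 1 = -(1 / (x + 1)) := by field_simp; ring
    rw [h2] at h
    linarith
  have hc : (0:ℝ) < x + 1/2 := by linarith
  constructor
  · have := mul_le_mul_of_nonneg_left hL_lo hc.le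
    have he : (x + 1/2) * (1/(x+1)) = 1 - 1 / (2 * (x + 1)) := by field_simp; ring
    unfold Rfun
    nlinarith
  · have := mul_le_mul_of_nonneg_left hL_up hc.le
    have he : (x + 1/2) * (1/x) = 1 + 1 / (2 * x) := by field_simp
    unfold Rfun
    nlinarith

lemma tendsto_Rfun : Tendsto Rfun atTop (𝓝 0) := by
  have hb : Tendsto (fun x : ℝ => 1 / (2 * x)) atTop (𝓝 0) := by
    have h4 : Tendsto (fun x : ℝ => 2 * x) atTop atTop :=
      Tendsto.const_mul_atTop (by norm_num) tendsto_id
    have h5 : Tendsto (fun x : ℝ => ((fun x : ℝ => 2 * x) x)⁻¹) atTop (𝓝 0) := h4.inv_tendsto_atTop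
    simpa [one_div] using h5
  have hlo : Tendsto (fun x : ℝ => -(1 / (2 * (x + 1)))) atTop (𝓝 0) := by
    have h4 : Tendsto (fun x : ℝ => 2 * (x + 1)) atTop atTop :=
      Tendsto.const_mul_atTop (by norm_num)
        (tendsto_atTop_add_const_right atTop 1 tendsto_id)
    have h5 : Tendsto (fun x : ℝ => ((fun x : ℝ => 2 * (x + 1)) x)⁻¹) atTop (𝓝 0) :=
      h4.inv_tendsto_atTop
    simpa [one_div] using h5.neg
  refine tendsto_of_tendsto_of_tendsto_of_le_of_le' hlo hb ?_ ?_
  · filter_upwards [eventually_gt_atTop (0:ℝ)] with x hx using (Rfun_bounds hx).1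
  · filter_upwards [eventually_gt_atTop (0:ℝ)] with x hx using (Rfun_bounds hx).2

lemma tendsto_Dfun : Tendsto Dfun atTop (𝓝 0) := by
  have h1 : Tendsto (fun x : ℝ => binetμ x - binetμ (x + 1)) atTop (𝓝 0) := by
    have := tendsto_binetμ.sub
      (tendsto_binetμ.comp (tendsto_atTop_add_const_right atTop 1 tendsto_id))
    simpa using this
  refine h1.congr' ?_
  filter_upwards [eventually_gt_atTop (0:ℝ)] with x hx using mu_diff hx

lemma Dfun_eq_Rfun {x : ℝ} (hx : 0 < x) : Dfun x = Rfun x := by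
  set φ : ℝ → ℝ := fun y => Dfun y - Rfun y with hφ
  have hφd : ∀ y : ℝ, 0 < y → HasDerivAt φ 0 y := by
    intro y hy
    have h := (hasDerivAt_Dfun hy).sub (hasDerivAt_Rfun hy)
    rw [binet_deriv_eq hy, sub_self] at h
    exact h
  have hconst : ∀ y : ℝ, x ≤ y → φ y = φ x := by
    intro y hxy
    have hcont : ContinuousOn φ (Icc x y) := fun z hz =>
      (hφd z (lt_of_lt_of_le hx hz.1)).differentiableAt.continuousAt.continuousWithinAt
    exact constant_of_has_deriv_right_zero hcont
      (fun z hz => (hφd z (lt_of_lt_of_le hx hz.1)).hasDerivWithinAt) y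
      (right_mem_Icc.2 hxy)
  have hlim : Tendsto φ atTop (𝓝 (0:ℝ)) := by
    simpa using tendsto_Dfun.sub tendsto_Rfun
  have hconst2 : Tendsto (fun _ : ℝ => φ x) atTop (𝓝 (0:ℝ)) := by
    refine hlim.congr' ?_
    filter_upwards [eventually_ge_atTop x] with y hy using hconst y hy
  have h0 : φ x = 0 := by
    have := tendsto_nhds_unique tendsto_const_nhds hconst2
    simpa using this
  have : Dfun x - Rfun x = 0 := h0
  linarith

lemma mu_recurrence {x : ℝ} (hx : 0 < x) : binetμ x = binetμ (x + 1) + Rfun x := by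
  have h := mu_diff hx
  rw [Dfun_eq_Rfun hx] at h
  linarith



lemma P_feq {y : ℝ} : stirlingP (y + 1) - stirlingP y - Real.log y = Rfun y := by
  unfold stirlingP Rfun
  ring

noncomputable def binetC : ℝ := stirlingP 1 + binetμ 1

noncomputable def binetE (x : ℝ) : ℝ := Real.exp (stirlingP x + binetμ x - binetC)

lemma binetE_eq_Gamma : EqOn binetE Real.Gamma (Ioi (0:ℝ)) := by
  apply Real.eq_Gamma_of_log_convex
  · have h1 : ConvexOn ℝ (Ioi 0) (fun x => stirlingP x + binetμ x + -binetC) :=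
      (stirlingP_convexOn.add binetμ_convexOn).add_const _
    have h2 : (Real.log ∘ binetE) = fun x => stirlingP x + binetμ x + -binetC := by
      funext x
      simp only [Function.comp_apply, binetE, Real.log_exp]
      ring
    rw [h2]
    exact h1
  · intro y hy
    have h1 := mu_recurrence hy
    have h2 := P_feq (y := y)
    have key : stirlingP (y + 1) + binetμ (y + 1) - binetC
        = Real.log y + (stirlingP y + binetμ y - binetC) := by linarith
    rw [binetE, binetE, key, Real.exp_add, Real.exp_log hy]
  · exact fun {y} _ => Real.exp_pos _
  · rw [binetE, binetC]
    norm_num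

lemma log_Gamma_eq {x : ℝ} (hx : 0 < x) :
    Real.log (Real.Gamma x) = stirlingP x + binetμ x - binetC := by
  rw [← binetE_eq_Gamma (mem_Ioi.2 hx), binetE, Real.log_exp]

lemma binetC_seq (n : ℕ) :
    binetC = stirlingP ((n:ℝ) + 1) + binetμ ((n:ℝ) + 1) - Real.log (n.factorial) := by
  have hx : (0:ℝ) < (n:ℝ) + 1 := by positivity
  have h := log_Gamma_eq hx
  rw [Real.Gamma_nat_eq_factorial] at h
  linarith

lemma log_factorial_eq (n : ℕ) (hn : 1 ≤ n) :
    Real.log (n.factorial) = Real.log (Stirling.stirlingSeq n)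
      + (n:ℝ) * Real.log n - n + (1/2) * Real.log n + (1/2) * Real.log 2 := by
  have hn0 : (0:ℝ) < n := by exact_mod_cast hn
  have hfac : (0:ℝ) < (n.factorial : ℝ) := by exact_mod_cast n.factorial_pos
  have hs : (0:ℝ) < √(2 * n) := Real.sqrt_pos.2 (by positivity)
  have hp : (0:ℝ) < ((n:ℝ) / Real.exp 1) ^ n := by positivity
  rw [Stirling.stirlingSeq, Real.log_div hfac.ne' (by positivity),
    Real.log_mul hs.ne' hp.ne', Real.log_sqrt (by positivity),
    Real.log_mul (by norm_num) hn0.ne', Real.log_pow,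
    Real.log_div hn0.ne' (Real.exp_ne_zero 1), Real.log_exp]
  ring

lemma tendsto_binetC_seq :
    Tendsto (fun n : ℕ => stirlingP ((n:ℝ) + 1) + binetμ ((n:ℝ) + 1)
      - Real.log (n.factorial)) atTop (𝓝 0) := by
  have hseq : ∀ n : ℕ, 1 ≤ n →
      stirlingP ((n:ℝ) + 1) + binetμ ((n:ℝ) + 1) - Real.log (n.factorial)
        = Rfun n + ((1/2) * Real.log π - Real.log (Stirling.stirlingSeq n))
          + binetμ ((n:ℝ) + 1) := by
    intro n hn
    have hn0 : (0:ℝ) < n := by exact_mod_cast hn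
    rw [log_factorial_eq n hn]
    unfold stirlingP Rfun
    have h2π : Real.log (2 * π) = Real.log 2 + Real.log π :=
      Real.log_mul (by norm_num) (ne_of_gt pi_pos)
    rw [h2π]
    ring
  have hμ : Tendsto (fun n : ℕ => binetμ ((n:ℝ) + 1)) atTop (𝓝 0) :=
    tendsto_binetμ.comp
      (tendsto_atTop_add_const_right atTop 1 tendsto_natCast_atTop_atTop)
  have hR : Tendsto (fun n : ℕ => Rfun n) atTop (𝓝 0) :=
    tendsto_Rfun.comp tendsto_natCast_atTop_atTop
  have hS : Tendsto (fun n : ℕ => (1/2) * Real.log π - Real.log (Stirling.stirlingSeq n))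
      atTop (𝓝 0) := by
    have hπ : (0:ℝ) < √π := Real.sqrt_pos.2 pi_pos
    have hlog : Tendsto (fun n : ℕ => Real.log (Stirling.stirlingSeq n)) atTop
        (𝓝 (Real.log (√π))) :=
      ((Real.continuousAt_log hπ.ne').tendsto).comp Stirling.tendsto_stirlingSeq_sqrt_pi
    have := (tendsto_const_nhds (x := (1/2) * Real.log π) (f := atTop (α := ℕ))).sub hlog
    rw [Real.log_sqrt pi_pos.le,
      show (1/2:ℝ) * Real.log π - Real.log π / 2 = 0 by ring] at this
    exact this
  have hcomb := (hR.add hS).add hμ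
  simp only [add_zero, zero_add] at hcomb
  refine hcomb.congr' ?_
  filter_upwards [eventually_ge_atTop 1] with n hn
  exact (hseq n hn).symm

lemma binetC_eq_zero : binetC = 0 := by
  have h1 : Tendsto (fun _ : ℕ => binetC) atTop (𝓝 binetC) := tendsto_const_nhds
  have h2 : Tendsto (fun _ : ℕ => binetC) atTop (𝓝 0) := by
    refine tendsto_binetC_seq.congr' ?_
    filter_upwards with n using (binetC_seq n).symm
  exact tendsto_nhds_unique h1 h2


/-- **Binet's first formula**: for `x > 0`, the integral
`∫_0^∞ (1/t) (1/2 − 1/t + 1/(eᵗ − 1)) e^{−t x} dt` converges and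
`ln Γ(x) = P(x) + ∫_0^∞ (1/t) (1/2 − 1/t + 1/(eᵗ − 1)) e^{−t x} dt`. -/
theorem binet_first_formula (x : ℝ) (hx : 0 < x) :
    IntegrableOn
        (fun t : ℝ => 1 / t * (1 / 2 - 1 / t + 1 / (Real.exp t - 1)) * Real.exp (-t * x))
        (Set.Ioi 0) ∧
      Real.log (Real.Gamma x) =
        stirlingP x +
          ∫ t in Set.Ioi (0 : ℝ),
            1 / t * (1 / 2 - 1 / t + 1 / (Real.exp t - 1)) * Real.exp (-t * x) := by
  constructor
  · exact binet_integrableOn hx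
  · have h := log_Gamma_eq hx
    rw [binetC_eq_zero, sub_zero] at h
    exact h
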